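/- arXiv:2003.09695 — 2 statements merged into one kernel-verified Lean document; each statement's English description precedes it below -/
import Mathlib

section
/- If a block matrix J = [[A, Bᵀ],[B, 0]] has A ∈ ℝ^{n×n} with symmetric part (A+Aᵀ)/2 positive definite on the kernel of B, and B ∈ ℝ^{m×n} has full row rank (equivalently, B satisfies a discrete inf-sup condition with constant β > 0), then J is invertible. -/
open Matrix

/-- if the symmetric part of `A` is positive definite on `ker B`
(equivalently `xᵀ A x > 0` for `0 ≠ x ∈ ker B`) and `B` has full row rank
(`B : ℝ^{m×n}` surjective, i.e. satisfies a discrete inf-sup condition), then the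
saddle point matrix `J = [[A, Bᵀ],[B,0]]` is invertible. -/
theorem saddle_point_invertible
    (n m : ℕ) (A : Matrix (Fin n) (Fin n) ℝ) (B : Matrix (Fin m) (Fin n) ℝ)
    (hA : ∀ x : Fin n → ℝ, B.mulVec x = 0 → x ≠ 0 → 0 < x ⬝ᵥ A.mulVec x)
    (hB : Function.Surjective B.mulVec) :
    IsUnit (Matrix.fromBlocks A Bᵀ B (0 : Matrix (Fin m) (Fin m) ℝ)) := by
  rw [Matrix.isUnit_iff_isUnit_det, isUnit_iff_ne_zero]
  intro hdet
  obtain ⟨v, hv, hmv⟩ := Matrix.exists_mulVec_eq_zero_iff.2 hdet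
  set x : Fin n → ℝ := v ∘ Sum.inl with hx
  set y : Fin m → ℝ := v ∘ Sum.inr with hy
  have hveq : v = Sum.elim x y := by ext (i | i) <;> rfl
  rw [hveq, Matrix.fromBlocks_mulVec] at hmv
  have h1 : A.mulVec x + Bᵀ.mulVec y = 0 := by
    funext i; exact congrFun hmv (Sum.inl i)
  have h2 : B.mulVec x = 0 := by
    funext i
    have := congrFun hmv (Sum.inr i)
    simpa using this
  have hcross : x ⬝ᵥ Bᵀ.mulVec y = 0 := by
    rw [Matrix.dotProduct_mulVec, Matrix.vecMul_transpose, h2, zero_dotProduct]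
  have hx0 : x = 0 := by
    by_contra hxne
    have hpos := hA x h2 hxne
    have hAx : A.mulVec x = -(Bᵀ.mulVec y) := by
      rwa [add_eq_zero_iff_eq_neg] at h1
    rw [hAx, dotProduct_neg, hcross, neg_zero] at hpos
    exact lt_irrefl 0 hpos
  have hBty : Bᵀ.mulVec y = 0 := by
    rw [hx0] at h1
    simpa using h1
  have hy0 : y = 0 := by
    have hself : y ⬝ᵥ y = 0 := by
      obtain ⟨w, hw⟩ := hB y
      calc y ⬝ᵥ y = y ⬝ᵥ B.mulVec w := by rw [hw]
        _ = Bᵀ.mulVec y ⬝ᵥ w := by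
            rw [Matrix.dotProduct_mulVec, ← Matrix.mulVec_transpose]
        _ = 0 := by rw [hBty, zero_dotProduct]
    exact (dotProduct_self_eq_zero).1 hself
  apply hv
  rw [hveq, hx0, hy0]
  ext (i | i) <;> simp
end

section
/- The POD projection error identity: with reduced space V_N = span{ζ_1,…,ζ_N} built from the first N POD modes of snapshots v_1,…,v_M in a Hilbert space, the sum of squared best-approximation errors satisfies (1/M) Σ_{m=1}^{M} min_{z ∈ V_N} ‖v_m − z‖² = Σ_{n=N+1}^{M} θ_n, where θ_1 ≥ θ_2 ≥ … ≥ θ_M ≥ 0 are the eigenvalues of the correlation matrix C_{ml} = (1/M)(v_m, v_l). -/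
open Matrix
open scoped BigOperators RealInnerProductSpace

/-!
Put `w n = ∑ m, x n m • v m`. Since `M • C` is the Gram matrix of the snapshots and the `x n` are
orthonormal eigenvectors of it, the `w n` are pairwise orthogonal with `‖w n‖ ^ 2 = M * θ n`; hence
`ζ n = ‖w n‖⁻¹ • w n` (also when `w n = 0`, as `0⁻¹ = 0`) and `V_N` is spanned by the first `N`
of the `w n`. A square matrix with orthonormal rows has orthonormal columns, so
`v m = ∑ n, x n m • w n`: the head of this sum lies in `V_N`, the tail is orthogonal to it, and the
squared best-approximation error is the squared norm `∑_{n ≥ N} x n m ^ 2 * (M * θ n)` of the tail.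
Summing over `m` and using `∑ m, x n m ^ 2 = 1` gives the identity.
-/

theorem Submodule.mem_orthogonal_span_iff {𝕜 E : Type*} [RCLike 𝕜] [NormedAddCommGroup E]
    [InnerProductSpace 𝕜 E] {s : Set E} {r : E} :
    r ∈ (span 𝕜 s)ᗮ ↔ ∀ u ∈ s, inner 𝕜 u r = 0 := by
  rw [← span_singleton_le_iff_mem, ← isOrtho_iff_le, isOrtho_comm, isOrtho_span]
  simp

theorem Submodule.span_image_inv_norm_smul {F κ : Type*} [NormedAddCommGroup F]
    [NormedSpace ℝ F] (w : κ → F) (s : Set κ) :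
    span ℝ ((fun n => ‖w n‖⁻¹ • w n) '' s) = span ℝ (w '' s) := by
  apply le_antisymm <;> rw [span_le] <;> rintro _ ⟨n, hn, rfl⟩
  · exact smul_mem _ _ (subset_span ⟨n, hn, rfl⟩)
  · rcases eq_or_ne (w n) 0 with h | h
    · simp [h]
    · rw [← smul_inv_smul₀ (norm_ne_zero_iff.2 h) (w n)]
      exact smul_mem _ _ (subset_span ⟨n, hn, rfl⟩)

theorem sum_smul_sum_smul_eq_of_orthonormal_rows {R V ι : Type*} [CommRing R] [AddCommGroup V]
    [Module R V] [Fintype ι] [DecidableEq ι] {x : ι → ι → R}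
    (hx : ∀ n k, x n ⬝ᵥ x k = if n = k then 1 else 0) (v : ι → V) (m : ι) :
    ∑ n, x n m • ∑ l, x n l • v l = v m := by
  have hrows : of x * (of x)ᵀ = 1 := by
    ext n k
    simpa [mul_apply, one_apply, dotProduct] using hx n k
  have hcols : (of x)ᵀ * of x = 1 := mul_eq_one_comm.mp hrows
  calc ∑ n, x n m • ∑ l, x n l • v l = ∑ l, ((of x)ᵀ * of x) m l • v l := by
        simp only [Finset.smul_sum, smul_smul, mul_apply, transpose_apply, of_apply,
          Finset.sum_smul]
        exact Finset.sum_comm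
    _ = v m := by simp [hcols, one_apply]

section Real

variable {E : Type*} [NormedAddCommGroup E] [InnerProductSpace ℝ E]

theorem inner_sum_smul_eq_ite_of_gram_mulVec {ι κ : Type*} [Fintype ι] [DecidableEq κ]
    {v : ι → E} {x : κ → ι → ℝ} {μ : κ → ℝ}
    (hx : ∀ n k, x n ⬝ᵥ x k = if n = k then 1 else 0) (heig : ∀ n, gram ℝ v *ᵥ x n = μ n • x n)
    (n k : κ) :
    ⟪∑ i, x n i • v i, ∑ i, x k i • v i⟫ = if n = k then μ n else 0 := by
  rw [← star_dotProduct_gram_mulVec, heig, star_trivial, dotProduct_smul, smul_eq_mul, hx]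
  split_ifs with h <;> simp [h]

theorem norm_sum_smul_sq_of_inner_eq_ite {κ : Type*} [DecidableEq κ] {w : κ → E} {μ : κ → ℝ}
    (hw : ∀ n k, ⟪w n, w k⟫ = if n = k then μ n else 0) (s : Finset κ) (c : κ → ℝ) :
    ‖∑ n ∈ s, c n • w n‖ ^ 2 = ∑ n ∈ s, c n ^ 2 * μ n := by
  rw [← real_inner_self_eq_norm_sq, sum_inner]
  refine Finset.sum_congr rfl fun n hn => ?_
  simp [inner_sum, real_inner_smul_left, real_inner_smul_right, hw, hn, sq, mul_assoc]

theorem sInf_norm_add_sub_sq_of_mem_orthogonal {K : Submodule ℝ E} {p r : E} (hp : p ∈ K)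
    (hr : r ∈ Kᗮ) :
    sInf {t : ℝ | ∃ z ∈ K, t = ‖p + r - z‖ ^ 2} = ‖r‖ ^ 2 := by
  refine IsLeast.csInf_eq ⟨⟨p, hp, by rw [add_sub_cancel_left]⟩, ?_⟩
  rintro t ⟨z, hz, rfl⟩
  have hperp : ⟪r, p - z⟫ = 0 := (K.mem_orthogonal' r).1 hr _ (K.sub_mem hp hz)
  rw [show p + r - z = r + (p - z) by abel, norm_add_sq_real, hperp]
  nlinarith [sq_nonneg ‖p - z‖]

theorem sInf_norm_sum_smul_sub_sq_span {κ : Type*} [Fintype κ] [DecidableEq κ] {w : κ → E}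
    {μ : κ → ℝ} (hw : ∀ n k, ⟪w n, w k⟫ = if n = k then μ n else 0) (S : Finset κ)
    (c : κ → ℝ) :
    sInf {t : ℝ | ∃ z ∈ Submodule.span ℝ (w '' S), t = ‖∑ n, c n • w n - z‖ ^ 2}
      = ∑ n ∈ Sᶜ, c n ^ 2 * μ n := by
  set K := Submodule.span ℝ (w '' S)
  have hhead : ∑ n ∈ S, c n • w n ∈ K :=
    K.sum_mem fun n hn => K.smul_mem _ (Submodule.subset_span ⟨n, hn, rfl⟩)
  have htail : ∑ n ∈ Sᶜ, c n • w n ∈ Kᗮ := by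
    refine Kᗮ.sum_mem fun n hn => Kᗮ.smul_mem _ ?_
    rw [Submodule.mem_orthogonal_span_iff]
    rintro _ ⟨k, hk, rfl⟩
    rw [hw, if_neg (by rintro rfl; exact Finset.mem_compl.1 hn hk)]
  rw [← Finset.sum_add_sum_compl S, sInf_norm_add_sub_sq_of_mem_orthogonal hhead htail,
    norm_sum_smul_sq_of_inner_eq_ite hw]

end Real

theorem pod_projection_error_identity_general
    (𝒴 : Type*) [NormedAddCommGroup 𝒴] [InnerProductSpace ℝ 𝒴]
    (M N : ℕ)
    (v : Fin M → 𝒴)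
    (C : Matrix (Fin M) (Fin M) ℝ)
    (hC : ∀ m l, C m l = (1 / (M : ℝ)) * ⟪v m, v l⟫)
    (x : Fin M → Fin M → ℝ) (θ : Fin M → ℝ)
    (horth : ∀ n k, x n ⬝ᵥ x k = if n = k then (1 : ℝ) else 0)
    (heig : ∀ n, C.mulVec (x n) = θ n • x n)
    (ζ : Fin M → 𝒴)
    (hζ : ∀ n, ζ n = (Real.sqrt ((M : ℝ) * θ n))⁻¹ • ∑ m, x n m • v m)
    (VN : Submodule ℝ 𝒴)
    (hVN : VN = Submodule.span ℝ (ζ '' {n : Fin M | (n : ℕ) < N})) :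
    (1 / (M : ℝ)) * ∑ m, sInf {r : ℝ | ∃ z ∈ VN, r = ‖v m - z‖ ^ 2}
      = ∑ n ∈ Finset.univ.filter (fun n : Fin M => N ≤ (n : ℕ)), θ n := by
  have hM : ∀ n : Fin M, (M : ℝ) ≠ 0 := fun n => Nat.cast_ne_zero.2 n.pos.ne'
  have hgram : gram ℝ v = (M : ℝ) • C := by
    ext m l
    simp [gram_apply, hC, hM m]
  set w : Fin M → 𝒴 := fun n => ∑ m, x n m • v m
  have hw : ∀ n k, ⟪w n, w k⟫ = if n = k then M * θ n else 0 :=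
    inner_sum_smul_eq_ite_of_gram_mulVec horth fun n => by
      rw [hgram, smul_mulVec, heig, smul_smul]
  have hζw : ζ = fun n => ‖w n‖⁻¹ • w n := funext fun n => by
    rw [hζ, norm_eq_sqrt_real_inner, hw, if_pos rfl]
  set S := Finset.univ.filter (fun n : Fin M => (n : ℕ) < N)
  have hVNw : VN = Submodule.span ℝ (w '' S) := by
    rw [hVN, hζw, Submodule.span_image_inv_norm_smul]
    simp [S]
  have hSc : Sᶜ = Finset.univ.filter (fun n : Fin M => N ≤ (n : ℕ)) := by
    ext n
    simp [S]
  have herr : ∀ m, sInf {r : ℝ | ∃ z ∈ VN, r = ‖v m - z‖ ^ 2}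
      = ∑ n ∈ Sᶜ, x n m ^ 2 * (M * θ n) := fun m => by
    rw [hVNw, ← sInf_norm_sum_smul_sub_sq_span hw, sum_smul_sum_smul_eq_of_orthonormal_rows horth]
  rw [← hSc, Finset.sum_congr rfl fun m _ => herr m, Finset.sum_comm, Finset.mul_sum]
  refine Finset.sum_congr rfl fun n _ => ?_
  have hunit : ∑ m, x n m ^ 2 = 1 := by simpa [dotProduct, sq] using horth n n
  rw [← Finset.sum_mul, hunit]
  field_simp [hM n]

/-- the POD projection error identity. With the reduced space
`V_N = span{ζ_1,…,ζ_N}` built from the first `N` POD modes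
`ζ_n = (M θ_n)^{-1/2} Σ_m (x_n)_m v_m` of the snapshots `v_1,…,v_M`, where
`x_n, θ_n` are the orthonormal eigenvectors and decreasingly sorted eigenvalues of
the correlation matrix `C_{ml} = (1/M) ⟪v_m, v_l⟫`, the sum of squared
best-approximation errors satisfies
`(1/M) Σ_m min_{z ∈ V_N} ‖v_m − z‖² = Σ_{n > N} θ_n`. -/
theorem pod_projection_error_identity
    (𝒴 : Type*) [NormedAddCommGroup 𝒴] [InnerProductSpace ℝ 𝒴] [CompleteSpace 𝒴]
    (M N : ℕ) [NeZero M] (hNM : N ≤ M)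
    (v : Fin M → 𝒴)
    (C : Matrix (Fin M) (Fin M) ℝ)
    (hC : ∀ m l, C m l = (1 / (M : ℝ)) * ⟪v m, v l⟫)
    (x : Fin M → Fin M → ℝ) (θ : Fin M → ℝ)
    (horth : ∀ n k, x n ⬝ᵥ x k = if n = k then (1 : ℝ) else 0)
    (heig : ∀ n, C.mulVec (x n) = θ n • x n)
    (hsort : Antitone θ) (hnonneg : ∀ n, 0 ≤ θ n)
    (ζ : Fin M → 𝒴)
    (hζ : ∀ n, ζ n = (Real.sqrt ((M : ℝ) * θ n))⁻¹ • ∑ m, x n m • v m)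
    (VN : Submodule ℝ 𝒴)
    (hVN : VN = Submodule.span ℝ (ζ '' {n : Fin M | (n : ℕ) < N})) :
    (1 / (M : ℝ)) * ∑ m, sInf {r : ℝ | ∃ z ∈ VN, r = ‖v m - z‖ ^ 2}
      = ∑ n ∈ Finset.univ.filter (fun n : Fin M => N ≤ (n : ℕ)), θ n :=
  pod_projection_error_identity_general 𝒴 M N v C hC x θ horth heig ζ hζ VN hVN
end
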